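/- arXiv:2405.15511 — 3 statements merged into one kernel-verified Lean document; each statement's English description precedes it below -/
import Mathlib

section
/- In the category of topological spaces, the pushout of the span ℝ ← (0,1) → ℝ, in which both legs are the subspace inclusion of the open interval (0,1) into ℝ, is not a Hausdorff space. (Hence this span of connected 1-manifolds of the same dimension, with open injective legs, has no pushout in the category of manifolds.) -/
/-! The two coprojections `ℝ ⟶ P` of the pushout agree on `(0,1)`; if `P` were Hausdorff, the
set where they agree would be closed and hence contain `0`. But the two copies of `0` are told
apart by the map from `P` to the indiscrete space `Prop` induced by the indicator of `(0,1)` on one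
copy and the constant `True` on the other: every map into an indiscrete space is continuous. -/

open CategoryTheory Limits

noncomputable section

/-- The inclusion `(0,1) ↪ ℝ` of the open unit interval, as a morphism in `TopCat`. -/
def iooIncl : TopCat.of (Set.Ioo (0 : ℝ) 1) ⟶ TopCat.of ℝ :=
  TopCat.ofHom ⟨Subtype.val, continuous_subtype_val⟩

namespace TopCat

universe u

variable {A X : TopCat.{u}} (f : A ⟶ X)

theorem pushout_inl_eq_inr_of_mem_closure_range [T2Space ↥(pushout f f)] {x : X}
    (hx : x ∈ closure (Set.range f)) : pushout.inl f f x = pushout.inr f f x := by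
  have hrange : Set.range f ⊆ {y | pushout.inl f f y = pushout.inr f f y} := by
    rintro _ ⟨a, rfl⟩
    exact congr($(pushout.condition (f := f) (g := f)) a)
  exact closure_minimal hrange
    (isClosed_eq (pushout.inl f f).hom.continuous (pushout.inr f f).hom.continuous) hx

theorem pushout_inl_ne_inr_of_notMem_range {x : X} (hx : x ∉ Set.range f) :
    pushout.inl f f x ≠ pushout.inr f f x := by
  let inRange : X ⟶ trivial.obj (ULift Prop) :=
    ofHom (Y := trivial.obj _) ⟨fun y => ULift.up (y ∈ Set.range f), continuous_top⟩
  let alwaysTrue : X ⟶ trivial.obj (ULift Prop) :=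
    ofHom (Y := trivial.obj _) ⟨fun _ => ULift.up True, continuous_top⟩
  have hcomm : f ≫ inRange = f ≫ alwaysTrue := by
    ext a
    exact congrArg ULift.up (eq_true (Set.mem_range_self a))
  intro h
  have hdesc := congr(pushout.desc inRange alwaysTrue hcomm $h)
  simp only [← ConcreteCategory.comp_apply, pushout.inl_desc, pushout.inr_desc] at hdesc
  exact hx (of_eq_true (congrArg ULift.down hdesc))

end TopCat

/-- The pushout in `TopCat` of the span `ℝ ← (0,1) → ℝ` (both legs the inclusion)
is not Hausdorff; hence this span of connected 1-manifolds has no pushout in the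
category of manifolds. -/
theorem pushout_along_open_interval_not_t2 :
    ¬ T2Space ↥(pushout iooIncl iooIncl) := by
  intro _
  have hrange : Set.range iooIncl = Set.Ioo 0 1 := Subtype.range_coe
  refine TopCat.pushout_inl_ne_inr_of_notMem_range iooIncl (x := (0 : ℝ)) ?_
    (TopCat.pushout_inl_eq_inr_of_mem_closure_range iooIncl ?_)
  · simp [hrange]
  · simp [hrange, closure_Ioo zero_ne_one]
end
end

section
/- Let k be a field, A = k[t] the polynomial ring, and K = Frac(A) its field of fractions. Let u : Spec K → Spec A be the morphism of schemes induced by the canonical inclusion A → K, and let f, g : Spec K → Spec A ⨿ Spec A be the composites of u with the two coproduct inclusions into the coproduct Spec A ⨿ Spec A in the category of schemes. Then the parallel pair (f, g) has no coequalizer in the category of schemes. (In particular, the category of schemes is not cocomplete.) -/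
open CategoryTheory Limits AlgebraicGeometry

noncomputable section

/-- The morphism `Spec K → Spec A` induced by the inclusion of `A = k[t]` into its
fraction field `K = k(t)`. -/
def genericPointIncl (k : Type) [Field k] :
    Spec (CommRingCat.of (FractionRing (Polynomial k))) ⟶ Spec (CommRingCat.of (Polynomial k)) :=
  Spec.map (CommRingCat.ofHom (algebraMap (Polynomial k) (FractionRing (Polynomial k))))

/-!
Suppose `Q` is the coequalizer, with maps `p₁, p₂ : 𝔸¹ ⟶ Q`. They agree after the generic point,
which is dominant, and `𝔸¹` is reduced; so they already agree on the preimage `W` of an affine,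
hence separated, neighbourhood of the image of the generic point. Since `𝔸¹` is Jacobson, `W`
contains a closed point `x`. The line doubled at `x` (two copies of `𝔸¹` glued along `𝔸¹ ∖ {x}`)
receives two maps that agree at the generic point but differ at `x`, so they cannot both factor
through `Q`.
-/

universe u

namespace AlgebraicGeometry

lemma Scheme.Hom.exists_mem_ι_comp_eq_of_isDominant {T X Y : Scheme} [IsReduced X] (u : T ⟶ X)
    [IsDominant u] {p₁ p₂ : X ⟶ Y} (h : u ≫ p₁ = u ≫ p₂) {x : X} (hx : p₁ x = p₂ x) :
    ∃ W : X.Opens, x ∈ W ∧ W.ι ≫ p₁ = W.ι ≫ p₂ := by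
  obtain ⟨V, hV, hxV, -⟩ := exists_isAffineOpen_mem_and_subset (x := p₁ x) (U := ⊤) trivial
  let W := p₁ ⁻¹ᵁ V ⊓ p₂ ⁻¹ᵁ V
  have : IsAffine V := hV
  have : IsDominant (u ∣_ W) := IsZariskiLocalAtTarget.restrict ‹_› W
  have hres : p₁.resLE V W inf_le_left = p₂.resLE V W inf_le_right := by
    refine ext_of_isDominant (u ∣_ W) ?_
    rw [← cancel_mono V.ι]
    simp [Scheme.Hom.resLE_comp_ι, morphismRestrict_ι_assoc, h]
  refine ⟨W, ⟨hxV, show p₂ x ∈ V from hx ▸ hxV⟩, ?_⟩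
  rw [← Scheme.Hom.resLE_comp_ι p₁ inf_le_left, ← Scheme.Hom.resLE_comp_ι p₂ inf_le_right, hres]

lemma Scheme.Opens.mem_of_pushout_inl_apply_eq_inr_apply {X : Scheme} (U : X.Opens) {x : X}
    (h : (pushout.inl U.ι U.ι).base x = (pushout.inr U.ι U.ι).base x) : x ∈ U := by
  obtain ⟨k, fi, fj, y, rfl, -⟩ := (Scheme.IsLocallyDirected.ι_eq_ι_iff (span U.ι U.ι)).mp h
  rcases k with _ | _ | _
  · obtain rfl : fi = WalkingSpan.Hom.fst := Subsingleton.elim _ _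
    exact y.2
  · nomatch fj
  · nomatch fi

lemma exists_mem_forall_ι_comp_eq_of_hasCoequalizer {T X : Scheme} [IsReduced X] (u : T ⟶ X)
    [IsDominant u] [HasCoequalizer (u ≫ coprod.inl) (u ≫ coprod.inr)] (t : T) :
    ∃ W : X.Opens, u t ∈ W ∧
      ∀ {Z : Scheme} (a b : X ⟶ Z), u ≫ a = u ≫ b → W.ι ≫ a = W.ι ≫ b := by
  let π := coequalizer.π (u ≫ coprod.inl) (u ≫ coprod.inr)
  have hπ : u ≫ coprod.inl ≫ π = u ≫ coprod.inr ≫ π := by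
    simpa using coequalizer.condition (u ≫ coprod.inl) (u ≫ coprod.inr)
  obtain ⟨W, htW, hW⟩ := u.exists_mem_ι_comp_eq_of_isDominant hπ
    (congrArg (fun f ↦ f.base t) hπ)
  refine ⟨W, htW, fun a b hab ↦ ?_⟩
  let d := coequalizer.desc (f := u ≫ coprod.inl) (g := u ≫ coprod.inr) (coprod.desc a b)
    (by simpa only [Category.assoc, coprod.inl_desc, coprod.inr_desc] using hab)
  simpa only [π, d, Category.assoc, coequalizer.π_desc, coprod.inl_desc, coprod.inr_desc] using
    hW =≫ d

theorem not_hasCoequalizer_of_isDominant {T X : Scheme} [IsReduced X] [JacobsonSpace X]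
    (u : T ⟶ X) [IsDominant u] [Nonempty T] (hu : ∀ t, ¬ IsClosed {u t}) :
    ¬ HasCoequalizer (u ≫ coprod.inl) (u ≫ coprod.inr) := by
  intro
  obtain ⟨t⟩ := ‹Nonempty T›
  obtain ⟨W, htW, hW⟩ := exists_mem_forall_ι_comp_eq_of_hasCoequalizer u t
  obtain ⟨x, hxW, hx⟩ := nonempty_inter_closedPoints ⟨u t, htW⟩ W.isOpen.isLocallyClosed
  let U : X.Opens := ⟨{x}ᶜ, hx.isOpen_compl⟩
  have hrange : Set.range u ⊆ Set.range U.ι := by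
    rintro _ ⟨s, rfl⟩
    rw [U.range_ι]
    rintro (hs : u s = x)
    exact hu s (hs ▸ hx)
  have hab : u ≫ pushout.inl U.ι U.ι = u ≫ pushout.inr U.ι U.ι := by
    rw [← IsOpenImmersion.lift_fac U.ι u hrange, Category.assoc, Category.assoc, pushout.condition]
  have hx' := congrArg (fun f ↦ f.base ⟨x, hxW⟩) (hW _ _ hab)
  exact U.mem_of_pushout_inl_apply_eq_inr_apply hx' rfl

lemma isDominant_Spec_map_of_injective {R S : CommRingCat} (f : R ⟶ S)
    (hf : Function.Injective f) : IsDominant (Spec.map f) := by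
  rw [isDominant_iff]
  exact (PrimeSpectrum.denseRange_comap_iff_ker_le_nilRadical f.hom).mpr
    ((RingHom.injective_iff_ker_eq_bot _).mp hf ▸ bot_le)

lemma not_isClosed_Spec_map_apply_of_injective {R K : Type u} [CommRing R] [Nontrivial R] [Field K]
    (f : R →+* K) (hf : Function.Injective f) (hR : ¬ IsField R) (t : Spec (.of K)) :
    ¬ IsClosed {Spec.map (CommRingCat.ofHom f) t} := by
  let p : PrimeSpectrum K := t
  have hp : p.asIdeal = ⊥ := Ideal.eq_bot_of_prime _
  change ¬ IsClosed {PrimeSpectrum.comap f p}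
  rw [PrimeSpectrum.isClosed_singleton_iff_isMaximal, PrimeSpectrum.comap_asIdeal]
  rwa [hp, Ideal.comap_bot_of_injective f hf, ← Ring.isField_iff_maximal_bot]

end AlgebraicGeometry

/-- The parallel pair `Spec k(t) ⇉ Spec k[t] ⨿ Spec k[t]`, given by composing the
generic-point inclusion with the two coproduct inclusions, has no coequalizer in the
category of schemes.  In particular, the category of schemes is not cocomplete. -/
theorem no_coequalizer_of_doubled_affine_line (k : Type) [Field k] :
    ¬ HasCoequalizer
      (genericPointIncl k ≫ (coprod.inl : Spec (CommRingCat.of (Polynomial k)) ⟶ _))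
      (genericPointIncl k ≫ (coprod.inr : Spec (CommRingCat.of (Polynomial k)) ⟶
        Spec (CommRingCat.of (Polynomial k)) ⨿ Spec (CommRingCat.of (Polynomial k)))) := by
  have hinj := IsFractionRing.injective (Polynomial k) (FractionRing (Polynomial k))
  have : IsDominant (genericPointIncl k) := isDominant_Spec_map_of_injective _ hinj
  exact not_hasCoequalizer_of_isDominant _
    (not_isClosed_Spec_map_apply_of_injective _ hinj (Polynomial.not_isField k))
end
end

section
/- Let W = {(z, w) ∈ ℂ × ℂ : z = 0 or w = 0}, with the subspace topology from ℂ × ℂ. There is no open neighborhood U of (0,0) in W such that U is homeomorphic to an open subset of ℂ. (In particular, the pushout of the span ℂ ← {0} → ℂ, which is the wedge of two complex lines meeting at the origin, is not a complex manifold, so the category of complex manifolds does not have all pushouts.) -/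
/-!
Every point of an open subset of `ℂ` has a neighbourhood whose punctured version is connected
(a punctured disc), and this property transfers along homeomorphisms of open subsets. At the
origin of the wedge, however, every punctured neighbourhood is split by the two disjoint open
sets `{z ≠ 0}` and `{w ≠ 0}`, each of which it meets.
-/

/-- The union of the two coordinate axes in `ℂ²`, i.e. the wedge of two complex lines
meeting at the origin. -/
def axesWedge : Set (ℂ × ℂ) := {p | p.1 = 0 ∨ p.2 = 0}

theorem origin_mem_axesWedge : ((0 : ℂ), (0 : ℂ)) ∈ axesWedge := Or.inl rfl

open Set Metric Filter Topology OpenPartialHomeomorph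

theorem isPreconnected_ball_diff_center {E : Type*} [NormedAddCommGroup E] [NormedSpace ℝ E]
    (hE : 1 < Module.rank ℝ E) (c : E) (r : ℝ) : IsPreconnected (ball c r \ {c}) := by
  rcases le_or_gt r 0 with hr | hr
  · rw [ball_eq_empty.2 hr, empty_sdiff]
    exact isPreconnected_empty
  have hball : ball c r \ {c} = univBall c r '' {0}ᶜ := by
    rw [compl_eq_univ_sdiff, ← univBall_source c r, (univBall c r).injOn.image_sdiff_subset
      (by simp), image_source_eq_target, univBall_target c hr, image_singleton,
      univBall_apply_zero]
  rw [hball]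
  exact (isConnected_compl_singleton_of_one_lt_rank hE 0).isPreconnected.image _
    (continuous_univBall c r).continuousOn

namespace Topology

variable {X Y : Type*} [TopologicalSpace X] [TopologicalSpace Y] {f : X → Y}

theorem IsOpenEmbedding.exists_mem_nhds_isPreconnected_diff_singleton (hf : IsOpenEmbedding f)
    {x : X} {s : Set X} (hs : s ∈ 𝓝 x) (hconn : IsPreconnected (s \ {x})) :
    ∃ t ∈ 𝓝 (f x), IsPreconnected (t \ {f x}) := by
  refine ⟨f '' s, hf.isOpenMap.image_mem_nhds hs, ?_⟩
  rw [← image_singleton, ← image_sdiff hf.injective]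
  exact hconn.image f hf.continuous.continuousOn

theorem IsEmbedding.isPreconnected_preimage_diff_singleton (hf : IsEmbedding f) {x : X}
    {t : Set Y} (htf : t ⊆ range f) (hconn : IsPreconnected (t \ {f x})) :
    IsPreconnected (f ⁻¹' t \ {x}) := by
  rwa [← hf.isInducing.isPreconnected_image, image_sdiff hf.injective,
    image_preimage_eq_of_subset htf, image_singleton]

end Topology

theorem axesWedge_not_isPreconnected_diff_origin {s : Set axesWedge}
    (hs : s ∈ 𝓝 ⟨(0, 0), origin_mem_axesWedge⟩) :
    ¬ IsPreconnected (s \ {⟨(0, 0), origin_mem_axesWedge⟩}) := by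
  have exists_ne_mem {ι : ℂ → axesWedge} (hι : Continuous ι)
      (h0 : ι 0 = ⟨(0, 0), origin_mem_axesWedge⟩) : ∃ a, ι a ∈ s ∧ a ≠ 0 := by
    have hι_mem : ∀ᶠ z in 𝓝[≠] (0 : ℂ), ι z ∈ s :=
      ((hι.tendsto 0).mono_left nhdsWithin_le_nhds).eventually (h0 ▸ hs)
    exact (hι_mem.and self_mem_nhdsWithin).exists
  obtain ⟨a, has, ha⟩ :=
    exists_ne_mem (ι := fun z ↦ ⟨(z, 0), Or.inr rfl⟩) (by fun_prop) rfl
  obtain ⟨b, hbs, hb⟩ :=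
    exists_ne_mem (ι := fun z ↦ ⟨(0, z), Or.inl rfl⟩) (by fun_prop) rfl
  intro hconn
  obtain ⟨p, -, hp₁, hp₂⟩ := hconn {p | p.1.1 ≠ 0} {p | p.1.2 ≠ 0}
    (isOpen_ne.preimage (by fun_prop)) (isOpen_ne.preimage (by fun_prop))
    (fun p ⟨_, hp⟩ ↦ by
      by_contra! h
      simp only [mem_union, mem_ofPred_eq, not_or, not_not] at h
      exact hp (Subtype.ext (Prod.ext h.1 h.2)))
    ⟨_, ⟨has, by simp [Subtype.ext_iff, ha]⟩, ha⟩
    ⟨_, ⟨hbs, by simp [Subtype.ext_iff, hb]⟩, hb⟩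
  exact p.2.elim hp₁ hp₂

/-- No open neighborhood of the origin in `W = {(z,w) : z = 0 or w = 0} ⊆ ℂ²` is
homeomorphic to an open subset of `ℂ`; in particular the pushout `ℂ ∨ ℂ` of the span
`ℂ ← {0} → ℂ` is not a complex manifold. -/
theorem axesWedge_origin_has_no_complex_euclidean_nbhd :
    ¬ ∃ U : Set axesWedge, IsOpen U ∧
      (⟨((0 : ℂ), (0 : ℂ)), origin_mem_axesWedge⟩ : axesWedge) ∈ U ∧
      ∃ V : Set ℂ, IsOpen V ∧ Nonempty (↥U ≃ₜ ↥V) := by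
  rintro ⟨U, hU, h0, V, hV, ⟨e⟩⟩
  set v : V := e ⟨_, h0⟩
  obtain ⟨r, hr, hrV⟩ := isOpen_iff.1 hV v v.2
  have hpunctured : IsPreconnected (((↑) : V → ℂ) ⁻¹' ball (v : ℂ) r \ {v}) :=
    IsEmbedding.subtypeVal.isPreconnected_preimage_diff_singleton (by simpa using hrV)
      (isPreconnected_ball_diff_center (by simp) _ _)
  have hf : IsOpenEmbedding (((↑) : U → axesWedge) ∘ e.symm) :=
    hU.isOpenEmbedding_subtypeVal.comp e.symm.isOpenEmbedding
  obtain ⟨t, ht, htconn⟩ := hf.exists_mem_nhds_isPreconnected_diff_singleton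
    (continuous_subtype_val.continuousAt.preimage_mem_nhds (ball_mem_nhds _ hr)) hpunctured
  simp only [Function.comp_apply, v, Homeomorph.symm_apply_apply] at ht htconn
  exact axesWedge_not_isPreconnected_diff_origin ht htconn
end
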